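/- Let A be a real d×d matrix, G a real d×m matrix, and h ≥ 0. Define Σ(h) = ∫₀ʰ exp(A(h−s)) G Gᵀ exp(Aᵀ(h−s)) ds, and let D = exp(h·[[A, GGᵀ], [0, −Aᵀ]]) be the exponential of the indicated 2d×2d block matrix, with D₁₁ and D₁₂ its d×d blocks in the first block row. Then Σ(h) = (∫₀ʰ exp(A(h−s)) G Gᵀ exp(−Aᵀ s) ds) · exp(Aᵀ h) and Σ(h) = D₁₂ · D₁₁ᵀ. -/

import Mathlib

/-!
Van Loan's observation: for `M = [[A, C], [0, B]]` the block matrix with blocks `exp (tA)`,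
`∫₀ᵗ exp ((t−s)A) C exp (sB) ds`, `0`, `exp (tB)` solves `Y' = M Y`, `Y 0 = 1`, hence equals
`exp (tM)` by uniqueness for linear ODEs. For `C = GGᵀ`, `B = −Aᵀ` its upper-right block is the
integral on the right of the first formula, which itself comes from pulling
`exp ((h−s)Aᵀ) = exp (−sAᵀ) exp (hAᵀ)` out of the integral; as `D₁₁ᵀ = exp (hA)ᵀ = exp (hAᵀ)`,
the second formula follows from the first.
-/

open Matrix MeasureTheory intervalIntegral NormedSpace
open scoped Matrix.Norms.L2Operator

section BanachAlgebra

variable {𝔸 : Type*} [NormedRing 𝔸] [NormedAlgebra ℝ 𝔸] [CompleteSpace 𝔸]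

theorem continuous_exp_smul (x : 𝔸) : Continuous fun t : ℝ => exp (t • x) :=
  continuous_iff_continuousAt.2 fun t => (hasDerivAt_exp_smul_const' x t).continuousAt

theorem eq_exp_smul_of_hasDerivAt_mul {M : 𝔸} {Y : ℝ → 𝔸}
    (hY : ∀ t, HasDerivAt Y (M * Y t) t) (hY₀ : Y 0 = 1) : Y = fun t => exp (t • M) :=
  ODE_solution_unique_univ (v := fun _ X => M * X) (s := fun _ => Set.univ) (t₀ := 0)
    (fun _ => (ContinuousLinearMap.mul ℝ 𝔸 M).lipschitz.lipschitzOnWith)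
    (fun t => ⟨hY t, trivial⟩) (fun t => ⟨hasDerivAt_exp_smul_const' M t, trivial⟩)
    (by simp [hY₀])

theorem intervalIntegral.integral_const_mul_of_intervalIntegrable {f : ℝ → 𝔸} {a b : ℝ}
    (hf : IntervalIntegrable f volume a b) (c : 𝔸) :
    ∫ x in a..b, c * f x = c * ∫ x in a..b, f x :=
  (ContinuousLinearMap.mul ℝ 𝔸 c).intervalIntegral_comp_comm hf

theorem intervalIntegral.integral_mul_const_of_intervalIntegrable {f : ℝ → 𝔸} {a b : ℝ}
    (hf : IntervalIntegrable f volume a b) (c : 𝔸) :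
    ∫ x in a..b, f x * c = (∫ x in a..b, f x) * c :=
  ((ContinuousLinearMap.mul ℝ 𝔸).flip c).intervalIntegral_comp_comm hf

end BanachAlgebra

theorem HasDerivAt.matrix_fromBlocks {l m n o : Type*} [Fintype l] [Fintype m] [Fintype n]
    [Fintype o] [DecidableEq l] [DecidableEq m] {a : ℝ → Matrix n l ℝ} {b : ℝ → Matrix n m ℝ}
    {c : ℝ → Matrix o l ℝ} {d : ℝ → Matrix o m ℝ} {a' b' c' d'} {t : ℝ}
    (ha : HasDerivAt a a' t) (hb : HasDerivAt b b' t) (hc : HasDerivAt c c' t)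
    (hd : HasDerivAt d d' t) :
    HasDerivAt (fun t => fromBlocks (a t) (b t) (c t) (d t)) (fromBlocks a' b' c' d') t := by
  let L : (Matrix n l ℝ × Matrix n m ℝ) × (Matrix o l ℝ × Matrix o m ℝ) →L[ℝ]
      Matrix (n ⊕ o) (l ⊕ m) ℝ := LinearMap.toContinuousLinearMap
    { toFun := fun X => fromBlocks X.1.1 X.1.2 X.2.1 X.2.2
      map_add' := fun X Y => (fromBlocks_add ..).symm
      map_smul' := fun r X => (fromBlocks_smul ..).symm }
  have hab : HasDerivAt (fun t => (a t, b t)) (a', b') t := ha.prodMk hb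
  have hcd : HasDerivAt (fun t => (c t, d t)) (c', d') t := hc.prodMk hd
  exact L.hasFDerivAt.comp_hasDerivAt t (hab.prodMk hcd)

namespace Matrix

variable {n : Type*} [Fintype n] [DecidableEq n]

theorem exp_add_smul (A : Matrix n n ℝ) (s t : ℝ) :
    exp ((s + t) • A) = exp (s • A) * exp (t • A) := by
  rw [add_smul]
  exact exp_add_of_commute _ _ (((Commute.refl A).smul_left s).smul_right t)

theorem exp_smul_fromBlocks_zero₂₁ (A B C : Matrix n n ℝ) (t : ℝ) :
    exp (t • fromBlocks A C 0 B) =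
      fromBlocks (exp (t • A)) (∫ s in (0:ℝ)..t, exp ((t - s) • A) * C * exp (s • B)) 0
        (exp (t • B)) := by
  -- with `exp (tA)` factored out, `t` only appears as a bound of the integral
  set Ψ : ℝ → Matrix n n ℝ := fun t => ∫ s in (0:ℝ)..t, exp ((-s) • A) * C * exp (s • B)
  have hcont : Continuous fun s : ℝ => exp ((-s) • A) * C * exp (s • B) :=
    (((continuous_exp_smul A).comp continuous_neg).mul continuous_const).mul
      (continuous_exp_smul B)
  have hΨ (t : ℝ) : HasDerivAt Ψ (exp ((-t) • A) * C * exp (t • B)) t :=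
    integral_hasDerivAt_right (hcont.intervalIntegrable _ _)
      (hcont.stronglyMeasurableAtFilter _ _) hcont.continuousAt
  have hexp_neg (t : ℝ) : exp (t • A) * exp ((-t) • A) = 1 := by
    rw [← exp_add_smul, add_neg_cancel, zero_smul, exp_zero]
  have hY (t : ℝ) : HasDerivAt (fun t => fromBlocks (exp (t • A)) (exp (t • A) * Ψ t) 0
      (exp (t • B))) (fromBlocks A C 0 B * fromBlocks (exp (t • A)) (exp (t • A) * Ψ t) 0
      (exp (t • B))) t := by
    refine ((hasDerivAt_exp_smul_const' A t).matrix_fromBlocks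
      ((hasDerivAt_exp_smul_const' A t).mul (hΨ t)) (hasDerivAt_const t 0)
      (hasDerivAt_exp_smul_const' B t)).congr_deriv ?_
    rw [fromBlocks_multiply]
    congr 1
    · rw [Matrix.mul_zero, add_zero]
    · rw [← mul_assoc, ← mul_assoc, ← mul_assoc, hexp_neg, one_mul, mul_assoc]
    · rw [Matrix.zero_mul, Matrix.mul_zero, add_zero]
    · rw [Matrix.zero_mul, zero_add]
  have hΦ := eq_exp_smul_of_hasDerivAt_mul hY (by simp [Ψ, fromBlocks_one])
  rw [← congrFun hΦ t]
  congr 1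
  rw [← integral_const_mul_of_intervalIntegrable (hcont.intervalIntegrable _ _)]
  refine integral_congr fun s _ => ?_
  rw [sub_eq_add_neg, exp_add_smul, mul_assoc, mul_assoc, mul_assoc]

end Matrix

theorem covariance_van_loan_formulas_general (d m : ℕ)
    (A : Matrix (Fin d) (Fin d) ℝ) (G : Matrix (Fin d) (Fin m) ℝ) (h : ℝ) :
    (∫ s in (0:ℝ)..h,
        NormedSpace.exp ((h - s) • A) * (G * Gᵀ) * NormedSpace.exp ((h - s) • Aᵀ)) =
      (∫ s in (0:ℝ)..h,
        NormedSpace.exp ((h - s) • A) * (G * Gᵀ) * NormedSpace.exp ((-s) • Aᵀ)) *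
        NormedSpace.exp (h • Aᵀ) ∧
    (∫ s in (0:ℝ)..h,
        NormedSpace.exp ((h - s) • A) * (G * Gᵀ) * NormedSpace.exp ((h - s) • Aᵀ)) =
      (NormedSpace.exp (h • Matrix.fromBlocks A (G * Gᵀ) 0 (-Aᵀ))).toBlocks₁₂ *
        ((NormedSpace.exp (h • Matrix.fromBlocks A (G * Gᵀ) 0 (-Aᵀ))).toBlocks₁₁)ᵀ := by
  have hcont : Continuous fun s : ℝ => exp ((h - s) • A) * (G * Gᵀ) * exp ((-s) • Aᵀ) :=
    (((continuous_exp_smul A).comp (continuous_sub_left h)).mul continuous_const).mul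
      ((continuous_exp_smul Aᵀ).comp continuous_neg)
  have hfactor : ∫ s in (0:ℝ)..h, exp ((h - s) • A) * (G * Gᵀ) * exp ((h - s) • Aᵀ) =
      (∫ s in (0:ℝ)..h, exp ((h - s) • A) * (G * Gᵀ) * exp ((-s) • Aᵀ)) * exp (h • Aᵀ) := by
    rw [← integral_mul_const_of_intervalIntegrable (hcont.intervalIntegrable _ _)]
    refine integral_congr fun s _ => ?_
    rw [sub_eq_neg_add, Matrix.exp_add_smul Aᵀ, ← mul_assoc]
  refine ⟨hfactor, ?_⟩
  rw [Matrix.exp_smul_fromBlocks_zero₂₁, toBlocks_fromBlocks₁₂, toBlocks_fromBlocks₁₁,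
    ← Matrix.exp_transpose, transpose_smul, hfactor]
  simp only [smul_neg, neg_smul]

/-- The covariance matrix `Σ(h) = ∫₀ʰ exp (A(h−s)) G Gᵀ exp (Aᵀ(h−s)) ds` of the stochastic
increment of the weak Local Linear discretization satisfies
`Σ(h) = (∫₀ʰ exp (A(h−s)) G Gᵀ exp (−Aᵀ s) ds) · exp (Aᵀ h)` and `Σ(h) = D₁₂ · D₁₁ᵀ`, where
`D = exp (h • [[A, GGᵀ], [0, −Aᵀ]])`. -/
theorem covariance_van_loan_formulas (d m : ℕ)
    (A : Matrix (Fin d) (Fin d) ℝ) (G : Matrix (Fin d) (Fin m) ℝ) (h : ℝ) (hh : 0 ≤ h) :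
    (∫ s in (0:ℝ)..h,
        NormedSpace.exp ((h - s) • A) * (G * Gᵀ) * NormedSpace.exp ((h - s) • Aᵀ)) =
      (∫ s in (0:ℝ)..h,
        NormedSpace.exp ((h - s) • A) * (G * Gᵀ) * NormedSpace.exp ((-s) • Aᵀ)) *
        NormedSpace.exp (h • Aᵀ) ∧
    (∫ s in (0:ℝ)..h,
        NormedSpace.exp ((h - s) • A) * (G * Gᵀ) * NormedSpace.exp ((h - s) • Aᵀ)) =
      (NormedSpace.exp (h • Matrix.fromBlocks A (G * Gᵀ) 0 (-Aᵀ))).toBlocks₁₂ *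
        ((NormedSpace.exp (h • Matrix.fromBlocks A (G * Gᵀ) 0 (-Aᵀ))).toBlocks₁₁)ᵀ :=
  covariance_van_loan_formulas_general d m A G h
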